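/- arXiv:1109.6184 — 4 statements merged into one kernel-verified Lean document; each statement's English description precedes it below -/
import Mathlib

section
/- Let A and B be unital complex *-algebras, ω : A → ℂ a linear functional, k a positive integer, and e₁,…,e_k ∈ A elements with ω(eₗ* eₘ) = δ_{lm} for all l,m ∈ {1,…,k}. Let α : A → A ⊗ B (algebraic tensor product over ℂ, with its canonical *-algebra structure) be a unital *-algebra homomorphism satisfying (ω ⊗ id_B)(α(a)) = ω(a)·1_B for all a ∈ A, and suppose there are elements U_{ml} ∈ B (m,l = 1,…,k) with α(eₗ) = Σ_{m=1}^k eₘ ⊗ U_{ml}. Then Σ_{p=1}^k (U_{pl})* · U_{pm} = δ_{lm}·1_B for all l,m; that is, the matrix U = (U_{ml}) ∈ M_k(B) is an isometry (U*U = I). -/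
/-! Apply the invariance of `ω` to `star (e l) * e m`. As `α` is a `*`-homomorphism, its image is
`star (∑ p, e p ⊗ U p l) * ∑ q, e q ⊗ U q m`; slicing with `ω ⊗ id`, orthonormality collapses the
double sum to `∑ p, star (U p l) * U p m`, while invariance gives `ω (star (e l) * e m) • 1`. -/

open scoped TensorProduct

/-- The canonical star operation on the algebraic tensor product `A ⊗[ℂ] B` of two complex
`*`-algebras, sending `a ⊗ b` to `star a ⊗ star b`. -/
noncomputable def tensorStar (A B : Type*) [Ring A] [Algebra ℂ A] [StarRing A] [StarModule ℂ A]
    [Ring B] [Algebra ℂ B] [StarRing B] [StarModule ℂ B] :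
    TensorProduct ℂ A B →+ TensorProduct ℂ A B :=
  TensorProduct.liftAddHom
    { toFun := fun a =>
        { toFun := fun b => star a ⊗ₜ[ℂ] star b
          map_zero' := by simp
          map_add' := fun b₁ b₂ => by simp [star_add, TensorProduct.tmul_add] }
      map_zero' := by ext b; simp
      map_add' := fun a₁ a₂ => by ext b; simp [star_add, TensorProduct.add_tmul] }
    (fun c a b => by
      simp only [AddMonoidHom.coe_mk, ZeroHom.coe_mk, star_smul, TensorProduct.smul_tmul,
        TensorProduct.tmul_smul, starRingEnd_apply])

section TensorStar

variable {A B : Type*} [Ring A] [Algebra ℂ A] [StarRing A] [StarModule ℂ A]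
    [Ring B] [Algebra ℂ B] [StarRing B] [StarModule ℂ B]

@[simp]
lemma tensorStar_tmul (a : A) (b : B) : tensorStar A B (a ⊗ₜ[ℂ] b) = star a ⊗ₜ[ℂ] star b :=
  rfl

lemma tensorStar_sum_tmul {ι : Type*} (s : Finset ι) (x : ι → A) (u : ι → B) :
    tensorStar A B (∑ i ∈ s, x i ⊗ₜ[ℂ] u i) = ∑ i ∈ s, star (x i) ⊗ₜ[ℂ] star (u i) := by
  simp only [map_sum, tensorStar_tmul]

end TensorStar

section Slice

variable {A B : Type*} [Ring A] [Algebra ℂ A] [Ring B] [Algebra ℂ B]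

lemma lid_rTensor_sum_tmul_mul_sum_tmul {ι : Type*} (ω : A →ₗ[ℂ] ℂ) (s : Finset ι)
    (x y : ι → A) (u v : ι → B) :
    ((TensorProduct.lid ℂ B).toLinearMap.comp (LinearMap.rTensor B ω))
        ((∑ i ∈ s, x i ⊗ₜ[ℂ] u i) * ∑ j ∈ s, y j ⊗ₜ[ℂ] v j) =
      ∑ i ∈ s, ∑ j ∈ s, ω (x i * y j) • (u i * v j) := by
  simp only [Finset.sum_mul_sum, Algebra.TensorProduct.tmul_mul_tmul, map_sum,
    LinearMap.comp_apply, LinearMap.rTensor_tmul, LinearEquiv.coe_coe, TensorProduct.lid_tmul]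

lemma lid_rTensor_sum_tmul_mul_sum_tmul_of_orthonormal {ι : Type*} [DecidableEq ι]
    (ω : A →ₗ[ℂ] ℂ) (s : Finset ι) (x y : ι → A) (u v : ι → B)
    (hxy : ∀ i j, ω (x i * y j) = if i = j then 1 else 0) :
    ((TensorProduct.lid ℂ B).toLinearMap.comp (LinearMap.rTensor B ω))
        ((∑ i ∈ s, x i ⊗ₜ[ℂ] u i) * ∑ j ∈ s, y j ⊗ₜ[ℂ] v j) =
      ∑ i ∈ s, u i * v i := by
  rw [lid_rTensor_sum_tmul_mul_sum_tmul]
  refine Finset.sum_congr rfl fun i hi => ?_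
  simp only [hxy, ite_smul, one_smul, zero_smul, Finset.sum_ite_eq, hi, if_true]

end Slice

theorem isometry_of_state_preserving_star_hom_general
    {A B : Type*} [Ring A] [Algebra ℂ A] [StarRing A] [StarModule ℂ A]
    [Ring B] [Algebra ℂ B] [StarRing B] [StarModule ℂ B]
    (ω : A →ₗ[ℂ] ℂ) (k : ℕ) (e : Fin k → A)
    (he : ∀ l m : Fin k, ω (star (e l) * e m) = if l = m then 1 else 0)
    (α : A →ₐ[ℂ] TensorProduct ℂ A B)
    (hstar : ∀ a : A, α (star a) = tensorStar A B (α a))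
    (hω : ∀ a : A,
      ((TensorProduct.lid ℂ B).toLinearMap.comp (LinearMap.rTensor B ω)) (α a) = ω a • (1 : B))
    (U : Fin k → Fin k → B)
    (hU : ∀ l : Fin k, α (e l) = ∑ m : Fin k, e m ⊗ₜ[ℂ] U m l) :
    ∀ l m : Fin k, ∑ p : Fin k, star (U p l) * U p m = if l = m then (1 : B) else 0 := by
  intro l m
  have h := hω (star (e l) * e m)
  rw [map_mul, hstar, hU, hU, tensorStar_sum_tmul,
    lid_rTensor_sum_tmul_mul_sum_tmul_of_orthonormal ω _ _ _ _ _ he, he] at h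
  rw [h, ite_smul, one_smul, zero_smul]

/-- if a unital `*`-homomorphism `α : A → A ⊗ B` preserves the state `ω` and maps
each `e l` to `∑ m, e m ⊗ U m l`, where `e₁, …, e_k` is orthonormal with respect to `ω`, then the
matrix `U` is an isometry: `U* U = 1`. -/
theorem isometry_of_state_preserving_star_hom
    {A B : Type*} [Ring A] [Algebra ℂ A] [StarRing A] [StarModule ℂ A]
    [Ring B] [Algebra ℂ B] [StarRing B] [StarModule ℂ B]
    (ω : A →ₗ[ℂ] ℂ) (k : ℕ) (hk : 0 < k) (e : Fin k → A)
    (he : ∀ l m : Fin k, ω (star (e l) * e m) = if l = m then 1 else 0)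
    (α : A →ₐ[ℂ] TensorProduct ℂ A B)
    (hstar : ∀ a : A, α (star a) = tensorStar A B (α a))
    (hω : ∀ a : A,
      ((TensorProduct.lid ℂ B).toLinearMap.comp (LinearMap.rTensor B ω)) (α a) = ω a • (1 : B))
    (U : Fin k → Fin k → B)
    (hU : ∀ l : Fin k, α (e l) = ∑ m : Fin k, e m ⊗ₜ[ℂ] U m l) :
    ∀ l m : Fin k, ∑ p : Fin k, star (U p l) * U p m = if l = m then (1 : B) else 0 :=
  isometry_of_state_preserving_star_hom_general ω k e he α hstar hω U hU
end

section
/- Let H be a complex Hilbert space and (P_n)_{n∈ℕ} a sequence of orthogonal projections on H (self-adjoint idempotent bounded operators) such that P_n ∘ P_m = 0 for n ≠ m and such that for every x ∈ H the family (P_n x)_{n∈ℕ} has sum x. Let T be a bounded operator on H and M ∈ ℕ such that P_n ∘ T ∘ P_m = 0 whenever |n − m| > M. Then for every x in the algebraic linear span of ⋃_{n∈ℕ} range(P_n), the families ((n:ℂ)·P_n(Tx))_n and ((n:ℂ)·P_n x)_n have only finitely many nonzero terms, and ‖ Σ_n (n:ℂ)·P_n(Tx) − T(Σ_n (n:ℂ)·P_n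 x) ‖ ≤ M(M+1)·‖T‖·‖x‖. In other words, if D denotes the (unbounded) operator Σ_n n·P_n defined on this span, the commutator [D,T] is bounded on the span, with norm at most M(M+1)‖T‖. -/
/-!
The ranges of the `P n` are pairwise orthogonal, so Pythagoras and `∑ n, P n x = x` give Parseval's
identity `‖x‖² = ∑ n, ‖P n x‖²`. Hence the band `∑ m, P (m + d) T P m` has norm at most `‖T‖`: it
sends the orthogonal pieces `P m x` to orthogonal vectors of norms at most `‖T‖ ‖P m x‖`. A vector
of the span has only finitely many nonzero pieces, on it the commutator `[D, T]` is the finite sum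
`∑_{|d| ≤ M} d • band_d`, and `∑_{|d| ≤ M} |d| = M (M + 1)`.
-/

open Finset
open scoped InnerProductSpace

theorem norm_sum_sq_eq_sum_norm_sq_of_pairwise_inner_eq_zero {𝕜 E ι : Type*} [RCLike 𝕜]
    [NormedAddCommGroup E] [InnerProductSpace 𝕜 E] (s : Finset ι) (v : ι → E)
    (hv : (s : Set ι).Pairwise fun i j => ⟪v i, v j⟫_𝕜 = 0) :
    ‖∑ i ∈ s, v i‖ ^ 2 = ∑ i ∈ s, ‖v i‖ ^ 2 := by
  have hdiag : ⟪∑ i ∈ s, v i, ∑ j ∈ s, v j⟫_𝕜 = ∑ i ∈ s, ⟪v i, v i⟫_𝕜 := by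
    simp_rw [sum_inner, inner_sum]
    exact sum_congr rfl fun i hi => sum_eq_single_of_mem i hi fun j hj hji => hv hi hj hji.symm
  rw [@norm_sq_eq_re_inner 𝕜, hdiag, map_sum]
  simp_rw [← @norm_sq_eq_re_inner 𝕜]

theorem Finset.sum_abs_Icc_neg_self (M : ℕ) :
    ∑ d ∈ Icc (-(M : ℤ)) M, |(d : ℝ)| = M * (M + 1) := by
  induction M with
  | zero => simp
  | succ k ih =>
    have hIcc : Icc (-((k + 1 : ℕ) : ℤ)) (k + 1 : ℕ) =
        cons (-((k + 1 : ℕ) : ℤ)) (cons ((k + 1 : ℕ) : ℤ) (Icc (-(k : ℤ)) k) (by simp))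
          (by simp only [mem_cons, mem_Icc]; omega) := by
      ext d; simp only [mem_cons, mem_Icc]; omega
    rw [hIcc, sum_cons, sum_cons, ih]
    push_cast
    rw [abs_neg, abs_of_nonneg (by positivity)]
    ring

theorem support_smul_subset_range {𝕜 E : Type*} [Zero 𝕜] [Zero E] [SMulWithZero 𝕜 E]
    {f : ℕ → E} {N : ℕ} (hf : ∀ n, N ≤ n → f n = 0) (c : ℕ → 𝕜) :
    Function.support (fun n => c n • f n) ⊆ range N := fun n hn =>
  mem_range.2 (not_le.1 fun h => hn (by simp only [hf n h, smul_zero]))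

namespace ContinuousLinearMap

variable {𝕜 E : Type*} [RCLike 𝕜] [NormedAddCommGroup E] [InnerProductSpace 𝕜 E]

section Family

variable {ι : Type*} {P : ι → E →L[𝕜] E}

theorem finite_support_apply_of_mem_span (horth : ∀ i j, i ≠ j → P i ∘L P j = 0) {x : E}
    (hx : x ∈ Submodule.span 𝕜 (⋃ i, Set.range (P i))) :
    (Function.support fun i => P i x).Finite := by
  induction hx using Submodule.span_induction with
  | mem y hy =>
    obtain ⟨_, ⟨i, rfl⟩, z, rfl⟩ := hy
    refine (Set.finite_singleton i).subset fun j hj => by_contra fun hji => hj ?_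
    change P j (P i z) = 0
    rw [← comp_apply, horth j i hji, zero_apply]
  | zero => simp
  | add y z _ _ hy hz =>
    refine (hy.union hz).subset fun i hi => ?_
    by_contra h
    simp_all
  | smul c y _ hy =>
    exact hy.subset fun i hi h => hi (by simp [h])

theorem sum_apply_eq_self (hsum : ∀ x, HasSum (fun i => P i x) x) {x : E} {s : Finset ι}
    (hs : ∀ i ∉ s, P i x = 0) : ∑ i ∈ s, P i x = x :=
  ((hsum x).unique (hasSum_sum_of_ne_finset_zero hs)).symm

variable [CompleteSpace E]

theorem inner_apply_apply_eq_zero_of_ne (hsa : ∀ i, IsSelfAdjoint (P i))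
    (horth : ∀ i j, i ≠ j → P i ∘L P j = 0) {i j : ι} (hij : i ≠ j) (u v : E) :
    ⟪P i u, P j v⟫_𝕜 = 0 := by
  rw [← (hsa i).adjoint_eq, adjoint_inner_left, ← comp_apply, horth i j hij, zero_apply,
    inner_zero_right]

variable (hsa : ∀ i, IsSelfAdjoint (P i)) (horth : ∀ i j, i ≠ j → P i ∘L P j = 0)
  (hsum : ∀ x, HasSum (fun i => P i x) x)
include hsa horth hsum

theorem hasSum_norm_sq_apply (x : E) : HasSum (fun i => ‖P i x‖ ^ 2) (‖x‖ ^ 2) := by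
  refine (((continuous_norm.pow 2).tendsto x).comp (hsum x)).congr fun s => ?_
  exact norm_sum_sq_eq_sum_norm_sq_of_pairwise_inner_eq_zero s _ fun i _ j _ hij =>
    inner_apply_apply_eq_zero_of_ne hsa horth hij x x

theorem sum_norm_sq_apply_le (s : Finset ι) (x : E) : ∑ i ∈ s, ‖P i x‖ ^ 2 ≤ ‖x‖ ^ 2 :=
  sum_le_hasSum s (fun _ _ => sq_nonneg _) (hasSum_norm_sq_apply hsa horth hsum x)

theorem norm_apply_le (i : ι) (x : E) : ‖P i x‖ ≤ ‖x‖ := by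
  have := sum_norm_sq_apply_le hsa horth hsum {i} x
  rwa [sum_singleton, pow_le_pow_iff_left₀ (norm_nonneg _) (norm_nonneg _) two_ne_zero] at this

theorem norm_sum_apply_map_apply_le (T : E →L[𝕜] E) (F : Finset (ι × ι))
    (hfst : Set.InjOn Prod.fst (F : Set (ι × ι))) (hsnd : Set.InjOn Prod.snd (F : Set (ι × ι)))
    (x : E) : ‖∑ p ∈ F, P p.1 (T (P p.2 x))‖ ≤ ‖T‖ * ‖x‖ := by
  classical
  refine (pow_le_pow_iff_left₀ (norm_nonneg _) (by positivity) two_ne_zero).1 ?_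
  calc ‖∑ p ∈ F, P p.1 (T (P p.2 x))‖ ^ 2 = ∑ p ∈ F, ‖P p.1 (T (P p.2 x))‖ ^ 2 :=
        norm_sum_sq_eq_sum_norm_sq_of_pairwise_inner_eq_zero F _ fun p hp q hq hpq =>
          inner_apply_apply_eq_zero_of_ne hsa horth (fun h => hpq (hfst hp hq h)) _ _
    _ ≤ ∑ p ∈ F, ‖T‖ ^ 2 * ‖P p.2 x‖ ^ 2 := by
        refine sum_le_sum fun p _ => ?_
        rw [← mul_pow]
        gcongr
        exact (norm_apply_le hsa horth hsum _ _).trans (T.le_opNorm _)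
    _ = ‖T‖ ^ 2 * ∑ m ∈ F.image Prod.snd, ‖P m x‖ ^ 2 := by rw [sum_image hsnd, mul_sum]
    _ ≤ ‖T‖ ^ 2 * ‖x‖ ^ 2 := by gcongr; exact sum_norm_sq_apply_le hsa horth hsum _ x
    _ = (‖T‖ * ‖x‖) ^ 2 := (mul_pow _ _ _).symm

end Family

section Band

variable {P : ℕ → E →L[𝕜] E} {T : E →L[𝕜] E} {M : ℕ}
  (hband : ∀ n m : ℕ, (M : ℤ) < |(n : ℤ) - (m : ℤ)| → P n ∘L T ∘L P m = 0)
include hband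

theorem apply_map_apply_eq_zero_of_band {n m : ℕ} (h : (M : ℤ) < |(n : ℤ) - (m : ℤ)|) (y : E) :
    P n (T (P m y)) = 0 := by
  simpa using DFunLike.congr_fun (hband n m h) y

variable (hsum : ∀ x, HasSum (fun n => P n x) x)
include hsum

theorem apply_map_eq_zero_of_band {x : E} {N : ℕ} (hN : ∀ n, N ≤ n → P n x = 0) {n : ℕ}
    (hn : N + M ≤ n) : P n (T x) = 0 := by
  rw [← sum_apply_eq_self hsum (s := range N) fun m hm => hN m (by simpa using hm), map_sum,
    map_sum]
  exact sum_eq_zero fun m hm =>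
    apply_map_apply_eq_zero_of_band hband (by rw [mem_range] at hm; rw [lt_abs]; omega) x

theorem map_apply_eq_sum_of_band {N m : ℕ} (hm : m < N) (y : E) :
    T (P m y) = ∑ n ∈ range (N + M), P n (T (P m y)) :=
  (sum_apply_eq_self hsum fun n hn =>
    apply_map_apply_eq_zero_of_band hband (by rw [mem_range] at hn; rw [lt_abs]; omega) y).symm

theorem finsum_smul_sub_map_finsum_smul_eq_sum {x : E} {N : ℕ} (hN : ∀ n, N ≤ n → P n x = 0) :
    (∑ᶠ n : ℕ, (n : 𝕜) • P n (T x)) - T (∑ᶠ n : ℕ, (n : 𝕜) • P n x) =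
      ∑ p ∈ range (N + M) ×ˢ range N, ((p.1 : 𝕜) - p.2) • P p.1 (T (P p.2 x)) := by
  have hDTx : ∑ n ∈ range (N + M), (n : 𝕜) • P n (T x) =
      ∑ p ∈ range (N + M) ×ˢ range N, (p.1 : 𝕜) • P p.1 (T (P p.2 x)) := by
    rw [sum_product]
    refine sum_congr rfl fun n _ => ?_
    dsimp only
    rw [← smul_sum, ← map_sum, ← map_sum,
      sum_apply_eq_self hsum fun m hm => hN m (by simpa using hm)]
  have hTDx : T (∑ m ∈ range N, (m : 𝕜) • P m x) =
      ∑ p ∈ range (N + M) ×ˢ range N, (p.2 : 𝕜) • P p.1 (T (P p.2 x)) := by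
    rw [sum_product_right, map_sum]
    refine sum_congr rfl fun m hm => ?_
    dsimp only
    rw [map_smul, ← smul_sum, ← map_apply_eq_sum_of_band hband hsum (mem_range.1 hm)]
  rw [finsum_eq_sum_of_support_subset _
      (support_smul_subset_range (fun n => apply_map_eq_zero_of_band hband hsum hN) _),
    finsum_eq_sum_of_support_subset _ (support_smul_subset_range hN _), hDTx, hTDx,
    ← sum_sub_distrib]
  exact sum_congr rfl fun p _ => (sub_smul _ _ _).symm

variable [CompleteSpace E] (hsa : ∀ n, IsSelfAdjoint (P n))
  (horth : ∀ n m, n ≠ m → P n ∘L P m = 0)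
include hsa horth

theorem norm_sum_sub_smul_apply_map_apply_le (F : Finset (ℕ × ℕ)) (x : E) :
    ‖∑ p ∈ F, ((p.1 : 𝕜) - p.2) • P p.1 (T (P p.2 x))‖ ≤ M * (M + 1) * ‖T‖ * ‖x‖ := by
  classical
  let band : ℤ → E := fun d => ∑ p ∈ F with (p.1 : ℤ) - p.2 = d, P p.1 (T (P p.2 x))
  have hsplit : ∑ p ∈ F, ((p.1 : 𝕜) - p.2) • P p.1 (T (P p.2 x)) =
      ∑ d ∈ Icc (-(M : ℤ)) M, (d : 𝕜) • band d := by
    rw [← sum_filter_of_ne (p := fun p => (p.1 : ℤ) - p.2 ∈ Icc (-(M : ℤ)) M) fun p _ hp => ?_,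
      ← sum_fiberwise_eq_sum_filter]
    · refine sum_congr rfl fun d _ => ?_
      rw [smul_sum]
      refine sum_congr rfl fun p hp => ?_
      rw [← (mem_filter.1 hp).2, Int.cast_sub, Int.cast_natCast, Int.cast_natCast]
    · by_contra hout
      refine hp ?_
      rw [apply_map_apply_eq_zero_of_band hband _ x, smul_zero]
      simp only [mem_Icc, not_and_or, not_le] at hout
      rw [lt_abs]
      omega
  have hband_le (d : ℤ) : ‖band d‖ ≤ ‖T‖ * ‖x‖ := by
    refine norm_sum_apply_map_apply_le hsa horth hsum T _ (fun p hp q hq h => ?_)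
      (fun p hp q hq h => ?_) x
    all_goals
      rw [mem_coe, mem_filter] at hp hq
      ext <;> omega
  calc ‖∑ p ∈ F, ((p.1 : 𝕜) - p.2) • P p.1 (T (P p.2 x))‖
      ≤ ∑ d ∈ Icc (-(M : ℤ)) M, |(d : ℝ)| * (‖T‖ * ‖x‖) := by
        rw [hsplit]
        refine norm_sum_le_of_le _ fun d _ => ?_
        rw [norm_smul, ← RCLike.ofReal_intCast, RCLike.norm_ofReal]
        exact mul_le_mul_of_nonneg_left (hband_le d) (abs_nonneg _)
    _ = M * (M + 1) * ‖T‖ * ‖x‖ := by rw [← sum_mul, sum_abs_Icc_neg_self]; ring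

end Band

end ContinuousLinearMap

open ContinuousLinearMap in
theorem commutator_bound_of_band_operator_general
    {H : Type*} [NormedAddCommGroup H] [InnerProductSpace ℂ H] [CompleteSpace H]
    (P : ℕ → H →L[ℂ] H)
    (hsa : ∀ n, IsSelfAdjoint (P n))
    (horth : ∀ n m, n ≠ m → P n ∘L P m = 0)
    (hsum : ∀ x : H, HasSum (fun n => P n x) x)
    (T : H →L[ℂ] H) (M : ℕ)
    (hband : ∀ n m : ℕ, (M : ℤ) < |(n : ℤ) - (m : ℤ)| → P n ∘L T ∘L P m = 0)
    (x : H) (hx : x ∈ Submodule.span ℂ (⋃ n : ℕ, Set.range (P n))) :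
    {n : ℕ | (n : ℂ) • P n (T x) ≠ 0}.Finite ∧
    {n : ℕ | (n : ℂ) • P n x ≠ 0}.Finite ∧
    ‖(∑ᶠ n : ℕ, (n : ℂ) • P n (T x)) - T (∑ᶠ n : ℕ, (n : ℂ) • P n x)‖ ≤
      (M : ℝ) * ((M : ℝ) + 1) * ‖T‖ * ‖x‖ := by
  obtain ⟨N, hN⟩ := Filter.eventually_atTop.1 <|
    Nat.cofinite_eq_atTop ▸ (finite_support_apply_of_mem_span horth hx).eventually_cofinite_notMem
  replace hN : ∀ n, N ≤ n → P n x = 0 := fun n hn => Function.notMem_support.1 (hN n hn)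
  have hTN : ∀ n, N + M ≤ n → P n (T x) = 0 := fun n => apply_map_eq_zero_of_band hband hsum hN
  refine ⟨(range (N + M)).finite_toSet.subset (support_smul_subset_range hTN _),
    (range N).finite_toSet.subset (support_smul_subset_range hN _), ?_⟩
  rw [finsum_smul_sub_map_finsum_smul_eq_sum hband hsum hN]
  exact norm_sum_sub_smul_apply_map_apply_le hband hsum hsa horth _ x

/-- given pairwise orthogonal self-adjoint projections `P n` on a Hilbert space `H`
summing (strongly) to the identity, and a bounded operator `T` which is a band operator of width
`M` with respect to the `P n` (i.e. `P n T P m = 0` for `|n - m| > M`), the commutator of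
`D = ∑ n, n • P n` with `T` is bounded on the algebraic span of the ranges of the `P n`, with
norm at most `M (M + 1) ‖T‖`. -/
theorem commutator_bound_of_band_operator
    {H : Type*} [NormedAddCommGroup H] [InnerProductSpace ℂ H] [CompleteSpace H]
    (P : ℕ → H →L[ℂ] H)
    (hsa : ∀ n, IsSelfAdjoint (P n))
    (hidem : ∀ n, P n ∘L P n = P n)
    (horth : ∀ n m, n ≠ m → P n ∘L P m = 0)
    (hsum : ∀ x : H, HasSum (fun n => P n x) x)
    (T : H →L[ℂ] H) (M : ℕ)
    (hband : ∀ n m : ℕ, (M : ℤ) < |(n : ℤ) - (m : ℤ)| → P n ∘L T ∘L P m = 0)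
    (x : H) (hx : x ∈ Submodule.span ℂ (⋃ n : ℕ, Set.range (P n))) :
    {n : ℕ | (n : ℂ) • P n (T x) ≠ 0}.Finite ∧
    {n : ℕ | (n : ℂ) • P n x ≠ 0}.Finite ∧
    ‖(∑ᶠ n : ℕ, (n : ℂ) • P n (T x)) - T (∑ᶠ n : ℕ, (n : ℂ) • P n x)‖ ≤
      (M : ℝ) * ((M : ℝ) + 1) * ‖T‖ * ‖x‖ :=
  commutator_bound_of_band_operator_general P hsa horth hsum T M hband x hx
end

section
/- Let B be a unital complex algebra and let U ∈ M₄(B) be a matrix each of whose rows and columns sums to 1 (i.e. Σ_l U_{kl} = 1 and Σ_l U_{lk} = 1 for every k); this holds in particular for any magic unitary. Let P₂ ∈ M₄(ℂ) be the matrix with entries (P₂)_{kl} = (1/4)·(−1)^{k+l} for k,l ∈ {0,1,2,3}, and let M ∈ M₄(ℂ) be the permutation matrix of the permutation of {0,1,2,3} exchanging 0 ↔ 2 and 1 ↔ 3 (so M_{kl} = 1 if |k − l| = 2 and 0 otherwise). Regarding P₂ and M in M₄(B) via the unital embedding ℂ → B, U commutes with P₂ if and only if U commutes with M. -/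
/-- The projection `P₂` from Example 3.3: `(P₂)ₖₗ = (1/4)·(−1)^(k+l)`. -/
noncomputable def exampleP2 : Matrix (Fin 4) (Fin 4) ℂ :=
  Matrix.of fun k l => (1 / 4 : ℂ) * (-1) ^ ((k : ℕ) + (l : ℕ))

/-- The adjacency matrix of two disjoint segments on `{0,1,2,3}`: `Mₖₗ = 1` iff `|k − l| = 2`. -/
def exampleM : Matrix (Fin 4) (Fin 4) ℂ :=
  Matrix.of fun k l =>
    if (k : ℕ) + 2 = (l : ℕ) ∨ (l : ℕ) + 2 = (k : ℕ) then (1 : ℂ) else 0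

/-!
Over `ℂ` one has `4 P₂ = 2 I + 2 M − J` with `J` the all-ones matrix. A matrix whose rows and
columns all sum to `1` commutes with `J`, so inside its centralizer `P₂` and `M` determine each
other by this identity.
-/

open Matrix

theorem Matrix.commute_allOnes_of_sums_eq {n B : Type*} [Fintype n] [Semiring B]
    {U : Matrix n n B} {c : B}
    (hrow : ∀ i, ∑ j, U i j = c) (hcol : ∀ j, ∑ i, U i j = c) :
    Commute U (of fun _ _ => 1) := by
  ext i j
  simp [mul_apply, hrow, hcol]

theorem Subalgebra.mem_iff_of_eq_smul_add_smul_add_smul {K A : Type*} [Field K] [Ring A]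
    [Algebra K A] (S : Subalgebra K A) {x y j : A} (hj : j ∈ S) {a b c : K} (hb : b ≠ 0)
    (hx : x = a • 1 + b • y + c • j) :
    x ∈ S ↔ y ∈ S := by
  have hby : x - a • 1 - c • j = b • y := by
    rw [hx]
    abel
  have hy : y = b⁻¹ • (x - a • 1 - c • j) := by
    rw [hby, smul_smul, inv_mul_cancel₀ hb, one_smul]
  constructor
  · intro hxS
    rw [hy]
    exact S.smul_mem (S.sub_mem (S.sub_mem hxS (S.smul_mem S.one_mem a)) (S.smul_mem hj c)) _
  · intro hyS
    rw [hx]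
    exact S.add_mem (S.add_mem (S.smul_mem S.one_mem a) (S.smul_mem hyS b)) (S.smul_mem hj c)

theorem exampleP2_eq :
    exampleP2 = (1 / 2 : ℂ) • 1 + (1 / 2 : ℂ) • exampleM + (-1 / 4 : ℂ) • of fun _ _ => 1 := by
  ext k l
  fin_cases k <;> fin_cases l <;> norm_num [exampleP2, exampleM, one_apply]

/-- a `4 × 4` matrix `U` over a unital complex algebra whose rows and columns all sum
to `1` commutes with `P₂` if and only if it commutes with the adjacency matrix `M` of two disjoint
segments. -/
theorem commutes_with_P2_iff_commutes_with_graph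
    {B : Type*} [Ring B] [Algebra ℂ B]
    (U : Matrix (Fin 4) (Fin 4) B)
    (hrow : ∀ k : Fin 4, ∑ l : Fin 4, U k l = 1)
    (hcol : ∀ k : Fin 4, ∑ l : Fin 4, U l k = 1) :
    U * exampleP2.map (algebraMap ℂ B) = exampleP2.map (algebraMap ℂ B) * U ↔
      U * exampleM.map (algebraMap ℂ B) = exampleM.map (algebraMap ℂ B) * U := by
  let S := (Subalgebra.centralizer ℂ {U}).comap (Algebra.ofId ℂ B).mapMatrix
  have mem_S (X : Matrix (Fin 4) (Fin 4) ℂ) :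
      X ∈ S ↔ U * X.map (algebraMap ℂ B) = X.map (algebraMap ℂ B) * U := by
    simp only [S, Subalgebra.mem_comap, Subalgebra.mem_centralizer_iff, Set.mem_singleton_iff,
      forall_eq, AlgHom.mapMatrix_apply]
    rfl
  have hJ : (of fun _ _ => 1 : Matrix (Fin 4) (Fin 4) ℂ) ∈ S := by
    have hmap : (of fun _ _ => 1 : Matrix (Fin 4) (Fin 4) ℂ).map (algebraMap ℂ B) =
        of fun _ _ => 1 := by
      ext; simp
    rw [mem_S, hmap]
    exact (commute_allOnes_of_sums_eq hrow hcol).eq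
  rw [← mem_S, ← mem_S]
  exact S.mem_iff_of_eq_smul_add_smul_add_smul hJ (by norm_num) exampleP2_eq
end

section
/- Let σ be a type with decidable equality and let l₁, l₂ be lists over σ of the same length. Then the run-length patterns of l₁ and l₂ coincide — i.e., splitting each list into maximal runs of consecutive equal elements yields the same list of run lengths — if and only if for every index j with j + 1 < length, the j-th and (j+1)-st entries of l₁ are equal exactly when the j-th and (j+1)-st entries of l₂ are equal. In particular, if two lists of the same length have different run-length patterns, then there exists j such that exactly one of the two lists has equal entries in positions j and j+1. -/
/-!
Prepending `a` to `b :: t` either lengthens the first run of `b :: t` by one (when `r a b`) or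
adds a new run of length one in front of it. Every run has positive length, so the two cases
are told apart by the first entry of the run-length list, and the run-length list of
`a :: b :: t` determines both `r a b` and the run-length list of `b :: t`. Induction along two
lists of equal length then matches equality of run lengths with equality of the adjacency
patterns `zipWith r l l.tail`.
-/

namespace List

variable {α β γ : Type*}

theorem exists_splitBy_cons (r : α → α → Bool) (a : α) (t : List α) :
    ∃ g gs, (a :: t).splitBy r = (a :: g) :: gs := by
  rcases h : (a :: t).splitBy r with _ | ⟨_ | ⟨b, g⟩, gs⟩
  · simp at h
  · exact absurd (h ▸ mem_cons_self) (nil_notMem_splitBy r _)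
  have := head_head_splitBy r (cons_ne_nil a t)
  simp only [h, head_cons] at this
  exact ⟨g, gs, this ▸ rfl⟩

theorem splitBy_cons_cons_of_rel {r : α → α → Bool} {a b : α} (t : List α) (hab : r a b)
    {g : List α} {gs : List (List α)} (h : (b :: t).splitBy r = (b :: g) :: gs) :
    (a :: b :: t).splitBy r = (a :: b :: g) :: gs := by
  have hflat := flatten_splitBy r (b :: t)
  have hnil := nil_notMem_splitBy r (b :: t)
  have hlast := isChain_getLast_head_splitBy r (b :: t)
  have hchain : ∀ m ∈ (b :: t).splitBy r, m.IsChain fun x y ↦ r x y :=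
    fun _ ↦ isChain_of_mem_splitBy
  rw [h] at hflat hnil hlast hchain
  rw [splitBy_eq_iff]
  refine ⟨by simp [← hflat], by simpa using hnil, by simpa [hab] using hchain, ?_⟩
  cases gs with
  | nil => simp
  | cons g' gs => simpa [getLast_cons] using hlast

theorem splitBy_cons_cons_of_not_rel {r : α → α → Bool} {a b : α} (t : List α)
    (hab : r a b = false) : (a :: b :: t).splitBy r = [a] :: (b :: t).splitBy r :=
  splitBy_append_cons (l := [a]) t (by simpa using hab)

def runLengths (r : α → α → Bool) (l : List α) : List ℕ :=
  (l.splitBy r).map length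

theorem exists_runLengths_cons (r : α → α → Bool) (a : α) (t : List α) :
    ∃ n ns, runLengths r (a :: t) = (n + 1) :: ns := by
  obtain ⟨g, gs, h⟩ := exists_splitBy_cons r a t
  exact ⟨g.length, gs.map length, by simp [runLengths, h]⟩

theorem runLengths_cons_cons (r : α → α → Bool) (a b : α) (t : List α) :
    runLengths r (a :: b :: t) =
      if r a b then (runLengths r (b :: t)).modifyHead (· + 1)
      else 1 :: runLengths r (b :: t) := by
  split_ifs with hab
  · obtain ⟨g, gs, h⟩ := exists_splitBy_cons r b t
    simp [runLengths, splitBy_cons_cons_of_rel t hab h, h]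
  · simp [runLengths, splitBy_cons_cons_of_not_rel t (by simpa using hab)]

theorem runLengths_cons_cons_eq_iff {r : α → α → Bool} {s : β → β → Bool} {a b : α} {c d : β}
    {t : List α} {u : List β} :
    runLengths r (a :: b :: t) = runLengths s (c :: d :: u) ↔
      r a b = s c d ∧ runLengths r (b :: t) = runLengths s (d :: u) := by
  obtain ⟨n, ns, hn⟩ := exists_runLengths_cons r b t
  obtain ⟨m, ms, hm⟩ := exists_runLengths_cons s d u
  rw [runLengths_cons_cons, runLengths_cons_cons, hn, hm]
  cases r a b <;> cases s c d <;> simp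

theorem runLengths_eq_iff_zipWith_tail_eq {r : α → α → Bool} {s : β → β → Bool} :
    ∀ {l₁ : List α} {l₂ : List β}, l₁.length = l₂.length →
      (runLengths r l₁ = runLengths s l₂ ↔ zipWith r l₁ l₁.tail = zipWith s l₂ l₂.tail)
  | [], [], _ | [_], [_], _ => by simp [runLengths, splitBy, splitBy.loop]
  | a :: b :: t, c :: d :: u, h => by
    rw [runLengths_cons_cons_eq_iff, runLengths_eq_iff_zipWith_tail_eq (by simpa using h)]
    simp
  | [], _ :: _, h | _ :: _, [], h | [_], _ :: _ :: _, h | _ :: _ :: _, [_], h => by simp at h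

theorem zipWith_tail_eq_iff {f : α → α → γ} {g : β → β → γ} {l₁ : List α} {l₂ : List β}
    (h : l₁.length = l₂.length) :
    zipWith f l₁ l₁.tail = zipWith g l₂ l₂.tail ↔
      ∀ j (hj : j + 1 < l₁.length), f (l₁[j]'(by omega)) l₁[j + 1] =
        g (l₂[j]'(by omega)) (l₂[j + 1]'(by omega)) := by
  rw [ext_getElem_iff]
  simp [h, Nat.lt_sub_iff_add_lt]

end List

/-- two lists of the same length have the same run-length pattern (the list of
lengths of maximal runs of consecutive equal elements) if and only if, for every index `j`, the
entries at positions `j` and `j+1` of the first list are equal exactly when those of the second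
list are. -/
theorem runLengths_eq_iff
    {σ : Type*} [DecidableEq σ] (l₁ l₂ : List σ) (hlen : l₁.length = l₂.length) :
    (l₁.splitBy (· == ·)).map List.length = (l₂.splitBy (· == ·)).map List.length ↔
      ∀ j : ℕ, (hj : j + 1 < l₁.length) →
        (l₁[j]'(by omega) = l₁[j + 1]'hj ↔
          l₂[j]'(by omega) = l₂[j + 1]'(by omega)) := by
  rw [← List.runLengths, ← List.runLengths, List.runLengths_eq_iff_zipWith_tail_eq hlen,
    List.zipWith_tail_eq_iff hlen]
  simp only [beq_eq_beq]
end
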